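/- arXiv:1805.02776 — 3 statements merged into one kernel-verified Lean document; each statement's English description precedes it below -/
import Mathlib

section
/- Let n ≥ 1, s ∈ (0,1), p > 2, and let u ∈ C¹(ℝⁿ) with u ∈ L_{sp}(ℝⁿ) and |∇u| ∈ L_{sp}(ℝⁿ). Then for every x ∈ ℝⁿ and every index 1 ≤ i ≤ n, ∫_{|y|>1} [ |u(x)−u(x+y)|^{p−2} |∂_i u(x) − ∂_i u(x+y)| + |u(x)−u(x−y)|^{p−2} |∂_i u(x) − ∂_i u(x−y)| ] / |y|^{n+sp} dy < ∞. -/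
open MeasureTheory

/-!
For `‖y‖ > 1` each summand of the integrand is at most `2^(p-2) (w x + w (x ± y)) / ‖y‖^(n+sp)`
with `w = |u|^(p-1) + ‖Du‖^(p-1)`: first `a^(p-2) b ≤ a^(p-1) + b^(p-1)`, then the triangle
inequality and convexity of `t ↦ t^(p-1)`. Since `1 + ‖x ± y‖ ≤ (2 + ‖x‖) ‖y‖` there, the kernel
`‖y‖^-(n+sp)` is comparable with the weight `(1 + ‖x ± y‖)^-(n+sp)` of the tail space, so the
`L_{sp}` assumptions on `u` and `Du` make the bound integrable; the constant term `w x` is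
integrable because `n + sp > n`.
-/

namespace Real

theorem rpow_add_le_mul_rpow_add_rpow {a b r : ℝ} (ha : 0 ≤ a) (hb : 0 ≤ b) (hr : 1 ≤ r) :
    (a + b) ^ r ≤ 2 ^ (r - 1) * (a ^ r + b ^ r) := by
  lift a to NNReal using ha
  lift b to NNReal using hb
  exact_mod_cast NNReal.rpow_add_le_mul_rpow_add_rpow a b hr

theorem rpow_mul_le_rpow_add_one_add_rpow_add_one {a b q : ℝ} (ha : 0 ≤ a) (hb : 0 ≤ b)
    (hq : 0 ≤ q) : a ^ q * b ≤ a ^ (q + 1) + b ^ (q + 1) := by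
  calc a ^ q * b ≤ max a b ^ q * max a b := by gcongr <;> simp
    _ = max a b ^ (q + 1) := (rpow_add_one' (le_max_of_le_left ha) (by linarith)).symm
    _ ≤ a ^ (q + 1) + b ^ (q + 1) := by
      rcases max_choice a b with h | h <;> rw [h]
      · exact le_add_of_nonneg_right (rpow_nonneg hb _)
      · exact le_add_of_nonneg_left (rpow_nonneg ha _)

end Real

theorem abs_sub_rpow_mul_abs_sub_le {q a b c d c' d' : ℝ} (hq : 0 ≤ q) (hc : |c| ≤ c')
    (hd : |d| ≤ d') :
    |a - b| ^ q * |c - d| ≤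
      2 ^ q * ((|a| ^ (q + 1) + c' ^ (q + 1)) + (|b| ^ (q + 1) + d' ^ (q + 1))) := by
  have hr : 1 ≤ q + 1 := by linarith
  have hc' : 0 ≤ c' := (abs_nonneg c).trans hc
  have hd' : 0 ≤ d' := (abs_nonneg d).trans hd
  calc |a - b| ^ q * |c - d| ≤ |a - b| ^ (q + 1) + |c - d| ^ (q + 1) :=
        Real.rpow_mul_le_rpow_add_one_add_rpow_add_one (abs_nonneg _) (abs_nonneg _) hq
    _ ≤ (|a| + |b|) ^ (q + 1) + (c' + d') ^ (q + 1) := by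
        gcongr
        · exact abs_sub _ _
        · exact (abs_sub c d).trans (add_le_add hc hd)
    _ ≤ 2 ^ q * (|a| ^ (q + 1) + |b| ^ (q + 1)) + 2 ^ q * (c' ^ (q + 1) + d' ^ (q + 1)) := by
        have h := Real.rpow_add_le_mul_rpow_add_rpow (abs_nonneg a) (abs_nonneg b) hr
        have h' := Real.rpow_add_le_mul_rpow_add_rpow hc' hd' hr
        rw [add_sub_cancel_right] at h h'
        exact add_le_add h h'
    _ = _ := by ring

theorem abs_sub_rpow_mul_abs_sub_apply_le {E : Type*} [NormedAddCommGroup E] [NormedSpace ℝ E]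
    (u : E → ℝ) (L : E → E →L[ℝ] ℝ) {v : E} (hv : ‖v‖ ≤ 1) {q : ℝ} (hq : 0 ≤ q) (x z : E) :
    |u x - u z| ^ q * |L x v - L z v| ≤
      2 ^ q * ((|u x| ^ (q + 1) + ‖L x‖ ^ (q + 1)) + (|u z| ^ (q + 1) + ‖L z‖ ^ (q + 1))) := by
  have hL : ∀ y, |L y v| ≤ ‖L y‖ := fun y =>
    ((L y).le_opNorm v).trans (mul_le_of_le_one_right (norm_nonneg _) hv)
  exact abs_sub_rpow_mul_abs_sub_le hq (hL x) (hL z)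

section Tail

variable {E : Type*} [NormedAddCommGroup E]

theorem one_add_norm_div_norm_rpow_le {x y z : E} {τ : ℝ} (hτ : 0 ≤ τ) (hy : 1 < ‖y‖)
    (hz : ‖z‖ ≤ ‖x‖ + ‖y‖) : (1 + ‖z‖) ^ τ / ‖y‖ ^ τ ≤ (2 + ‖x‖) ^ τ := by
  have hy0 : 0 < ‖y‖ := one_pos.trans hy
  rw [← Real.div_rpow (by positivity) hy0.le]
  gcongr
  rw [div_le_iff₀ hy0]
  nlinarith [norm_nonneg x]

variable [MeasurableSpace E] [BorelSpace E] {μ : Measure E}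

theorem integrableOn_div_norm_rpow_of_integrable {φ : E → E} {g : E → ℝ} {τ : ℝ} (x : E)
    (hτ : 0 ≤ τ) (hφ : Continuous φ) (hφx : ∀ y, ‖φ y‖ ≤ ‖x‖ + ‖y‖)
    (hg : Integrable (fun y => g y / (1 + ‖φ y‖) ^ τ) μ) :
    IntegrableOn (fun y => g y / ‖y‖ ^ τ) {y | 1 < ‖y‖} μ := by
  have hS : MeasurableSet {y : E | 1 < ‖y‖} := measurableSet_lt measurable_const measurable_norm
  have hsplit : (fun y => g y / ‖y‖ ^ τ) =
      fun y => g y / (1 + ‖φ y‖) ^ τ * ((1 + ‖φ y‖) ^ τ / ‖y‖ ^ τ) := by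
    ext y
    have : (1 + ‖φ y‖) ^ τ ≠ 0 := (Real.rpow_pos_of_pos (by positivity) τ).ne'
    field_simp
  rw [hsplit]
  refine hg.integrableOn.mul_bdd (c := (2 + ‖x‖) ^ τ) ?_ ?_
  · exact (by fun_prop : Measurable fun y => (1 + ‖φ y‖) ^ τ / ‖y‖ ^ τ).aestronglyMeasurable
  · refine (ae_restrict_iff' hS).2 (Filter.Eventually.of_forall fun y (hy : 1 < ‖y‖) => ?_)
    rw [Real.norm_of_nonneg (by positivity)]
    exact one_add_norm_div_norm_rpow_le hτ hy (hφx y)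

variable [NormedSpace ℝ E] [FiniteDimensional ℝ E] [μ.IsAddHaarMeasure] [μ.IsNegInvariant]

theorem integrableOn_symm_div_norm_rpow_of_integrable {w : E → ℝ} {τ : ℝ}
    (hτ : (Module.finrank ℝ E : ℝ) < τ) (hw : Integrable (fun z => w z / (1 + ‖z‖) ^ τ) μ)
    (x : E) : IntegrableOn (fun y => (2 * w x + w (x + y) + w (x - y)) / ‖y‖ ^ τ)
      {y | 1 < ‖y‖} μ := by
  have hτ0 : 0 ≤ τ := (Nat.cast_nonneg _).trans hτ.le
  have hconst : Integrable (fun y => 2 * w x / (1 + ‖y‖) ^ τ) μ := by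
    refine ((integrable_one_add_norm hτ).const_mul (2 * w x)).congr (.of_forall fun y => ?_)
    simp only [Real.rpow_neg (by positivity : (0:ℝ) ≤ 1 + ‖y‖), div_eq_mul_inv]
  simp only [add_div]
  refine ((integrableOn_div_norm_rpow_of_integrable x hτ0 continuous_id
    (fun y => le_add_of_nonneg_left (norm_nonneg x)) hconst).add
    (integrableOn_div_norm_rpow_of_integrable x hτ0 (by fun_prop) (norm_add_le x)
      (hw.comp_add_left x))).add
    (integrableOn_div_norm_rpow_of_integrable x hτ0 (by fun_prop) (norm_sub_le x)
      (hw.comp_sub_left x))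

end Tail

theorem stmt9_general (n : ℕ) (s p : ℝ) (hs : s ∈ Set.Ioo (0:ℝ) 1) (hp : 2 < p)
    (u : EuclideanSpace ℝ (Fin n) → ℝ) (hu : ContDiff ℝ 1 u)
    (hutail : MeasureTheory.Integrable
      (fun x : EuclideanSpace ℝ (Fin n) => |u x| ^ (p-1) / (1 + ‖x‖) ^ ((n : ℝ) + s * p)))
    (hgtail : MeasureTheory.Integrable
      (fun x : EuclideanSpace ℝ (Fin n) => ‖fderiv ℝ u x‖ ^ (p-1) / (1 + ‖x‖) ^ ((n : ℝ) + s * p)))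
    (x : EuclideanSpace ℝ (Fin n)) (i : Fin n) :
    MeasureTheory.IntegrableOn
      (fun y : EuclideanSpace ℝ (Fin n) =>
        ( |u x - u (x + y)| ^ (p-2) *
            |fderiv ℝ u x (EuclideanSpace.single i 1) - fderiv ℝ u (x + y) (EuclideanSpace.single i 1)|
        + |u x - u (x - y)| ^ (p-2) *
            |fderiv ℝ u x (EuclideanSpace.single i 1) - fderiv ℝ u (x - y) (EuclideanSpace.single i 1)| )
        / ‖y‖ ^ ((n : ℝ) + s * p))
      {y : EuclideanSpace ℝ (Fin n) | 1 < ‖y‖} := by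
  set τ : ℝ := (n : ℝ) + s * p
  have hτ : (Module.finrank ℝ (EuclideanSpace ℝ (Fin n)) : ℝ) < τ := by
    rw [finrank_euclideanSpace_fin]
    nlinarith [hs.1]
  set w : EuclideanSpace ℝ (Fin n) → ℝ := fun z => |u z| ^ (p - 1) + ‖fderiv ℝ u z‖ ^ (p - 1)
  have hw : Integrable (fun z => w z / (1 + ‖z‖) ^ τ) :=
    (hutail.add hgtail).congr (.of_forall fun z => (add_div _ _ _).symm)
  have hpointwise : ∀ z, |u x - u z| ^ (p - 2) *
      |fderiv ℝ u x (EuclideanSpace.single i 1) - fderiv ℝ u z (EuclideanSpace.single i 1)| ≤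
      2 ^ (p - 2) * (w x + w z) := fun z => by
    have h := abs_sub_rpow_mul_abs_sub_apply_le u (fderiv ℝ u) (v := EuclideanSpace.single i 1)
      (by simp) (by linarith : 0 ≤ p - 2) x z
    rwa [show p - 2 + 1 = p - 1 by ring] at h
  refine ((integrableOn_symm_div_norm_rpow_of_integrable hτ hw x).const_mul (2 ^ (p - 2))).mono'
    ?_ (.of_forall fun y => ?_)
  · have hu_cont := hu.continuous
    have hDu_cont := hu.continuous_fderiv one_ne_zero
    exact (by fun_prop : Measurable _).aestronglyMeasurable
  · rw [Real.norm_of_nonneg (by positivity)]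
    calc _ ≤ (2 ^ (p - 2) * (w x + w (x + y)) + 2 ^ (p - 2) * (w x + w (x - y))) / ‖y‖ ^ τ := by
          gcongr ?_ / _
          exact add_le_add (hpointwise (x + y)) (hpointwise (x - y))
      _ = _ := by ring

/-- let `n ≥ 1`, `s ∈ (0,1)`, `p > 2`, and `u ∈ C¹(ℝⁿ)` with
`u ∈ L_{sp}(ℝⁿ)` and `|∇u| ∈ L_{sp}(ℝⁿ)`. Then for every `x` and every index `i`,
`∫_{|y|>1} [ |u(x)−u(x+y)|^{p−2}|∂ᵢu(x)−∂ᵢu(x+y)|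
  + |u(x)−u(x−y)|^{p−2}|∂ᵢu(x)−∂ᵢu(x−y)| ] / |y|^{n+sp} dy < ∞`. -/
theorem stmt9 (n : ℕ) (hn : 1 ≤ n) (s p : ℝ) (hs : s ∈ Set.Ioo (0:ℝ) 1) (hp : 2 < p)
    (u : EuclideanSpace ℝ (Fin n) → ℝ) (hu : ContDiff ℝ 1 u)
    (huloc : MeasureTheory.LocallyIntegrable u)
    (hutail : MeasureTheory.Integrable
      (fun x : EuclideanSpace ℝ (Fin n) => |u x| ^ (p-1) / (1 + ‖x‖) ^ ((n : ℝ) + s * p)))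
    (hgloc : MeasureTheory.LocallyIntegrable (fun x : EuclideanSpace ℝ (Fin n) => ‖fderiv ℝ u x‖))
    (hgtail : MeasureTheory.Integrable
      (fun x : EuclideanSpace ℝ (Fin n) => ‖fderiv ℝ u x‖ ^ (p-1) / (1 + ‖x‖) ^ ((n : ℝ) + s * p)))
    (x : EuclideanSpace ℝ (Fin n)) (i : Fin n) :
    MeasureTheory.IntegrableOn
      (fun y : EuclideanSpace ℝ (Fin n) =>
        ( |u x - u (x + y)| ^ (p-2) *
            |fderiv ℝ u x (EuclideanSpace.single i 1) - fderiv ℝ u (x + y) (EuclideanSpace.single i 1)|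
        + |u x - u (x - y)| ^ (p-2) *
            |fderiv ℝ u x (EuclideanSpace.single i 1) - fderiv ℝ u (x - y) (EuclideanSpace.single i 1)| )
        / ‖y‖ ^ ((n : ℝ) + s * p))
      {y : EuclideanSpace ℝ (Fin n) | 1 < ‖y‖} :=
  stmt9_general n s p hs hp u hu hutail hgtail x i
end

section
/- Let n ≥ 1, p > 2, let x ∈ ℝⁿ, and let u be C³ on a neighborhood of the closed ball of radius 1 centered at x. Then for every index 1 ≤ i ≤ n there exists a constant C > 0 such that for all y ∈ ℝⁿ with 0 < |y| ≤ 1: | |u(x)−u(x+y)|^{p−2}(∂_i u(x) − ∂_i u(x+y)) + |u(x)−u(x−y)|^{p−2}(∂_i u(x) − ∂_i u(x−y)) | ≤ C (|y|^{2p−3} + |y|^p). -/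
/-!
With `q = p - 2`, `s± = |u x - u (x ± y)|` and `b± = ∂ᵢu x - ∂ᵢu (x ± y)`, the sum equals
`s₊^q (b₊ + b₋) + (s₋^q - s₊^q) b₋`. Symmetric second differences make `b₊ + b₋` and `s₊ - s₋`
of order `|y|²`, while Lipschitz bounds make `s±` and `b₋` of order `|y|`. So the first term is
`O(|y|^{q+2}) = O(|y|^p)`. For the second, `|s₋^q - s₊^q|` is at most `|s₋ - s₊|^q = O(|y|^{2q})`
when `q ≤ 1` (subadditivity of `r ↦ r^q`), and at most `q (L|y|)^{q-1} |s₋ - s₊| = O(|y|^{q+1})`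
when `q ≥ 1` (mean value theorem, `L` a Lipschitz constant of `u`); multiplied by `|b₋| = O(|y|)`
this gives `O(|y|^{2p-3})`, resp. `O(|y|^p)`.
-/

open Set Metric
open scoped NNReal

theorem abs_rpow_sub_rpow_le_abs_sub_rpow {q s t : ℝ} (hq₀ : 0 ≤ q) (hq₁ : q ≤ 1)
    (hs : 0 ≤ s) (ht : 0 ≤ t) : |s ^ q - t ^ q| ≤ |s - t| ^ q := by
  wlog hts : t ≤ s generalizing s t
  · rw [abs_sub_comm, abs_sub_comm s]
    exact this ht hs (le_of_not_ge hts)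
  have h := Real.rpow_add_le_add_rpow (sub_nonneg.2 hts) ht hq₀ hq₁
  rw [sub_add_cancel] at h
  rw [abs_of_nonneg (sub_nonneg.2 (Real.rpow_le_rpow ht hts hq₀)),
    abs_of_nonneg (sub_nonneg.2 hts)]
  linarith

theorem abs_rpow_sub_rpow_le_mul_abs_sub {q s t R : ℝ} (hq : 1 ≤ q) (hs : s ∈ Icc 0 R)
    (ht : t ∈ Icc 0 R) : |s ^ q - t ^ q| ≤ q * R ^ (q - 1) * |s - t| := by
  have hderiv (r : ℝ) : HasDerivAt (fun r : ℝ => r ^ q) (q * r ^ (q - 1)) r :=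
    Real.hasDerivAt_rpow_const (Or.inr hq)
  have hbound : ∀ r ∈ Icc 0 R, ‖deriv (fun r : ℝ => r ^ q) r‖ ≤ q * R ^ (q - 1) := by
    intro r hr
    rw [(hderiv r).deriv, Real.norm_eq_abs, abs_of_nonneg (by have := hr.1; positivity)]
    gcongr
    exacts [hr.1, hr.2]
  simpa only [Real.norm_eq_abs] using (convex_Icc 0 R).norm_image_sub_le_of_norm_deriv_le
    (fun r _ => (hderiv r).differentiableAt) hbound ht hs

theorem abs_rpow_sub_rpow_le_of_abs_sub_le {q r s t L M : ℝ} (hq : 0 < q) (hr : 0 ≤ r)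
    (hL : 0 ≤ L) (hM : 0 ≤ M) (hs : s ∈ Icc 0 (L * r)) (ht : t ∈ Icc 0 (L * r))
    (hst : |s - t| ≤ M * r ^ 2) :
    |s ^ q - t ^ q| ≤ M ^ q * r ^ (2 * q) + q * L ^ (q - 1) * M * r ^ (q + 1) := by
  rcases le_total q 1 with hq₁ | hq₁
  · have hsmall : |s ^ q - t ^ q| ≤ M ^ q * r ^ (2 * q) :=
      calc |s ^ q - t ^ q| ≤ |s - t| ^ q := abs_rpow_sub_rpow_le_abs_sub_rpow hq.le hq₁ hs.1 ht.1
        _ ≤ (M * r ^ 2) ^ q := by gcongr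
        _ = M ^ q * r ^ (2 * q) := by
          rw [Real.mul_rpow hM (by positivity), Real.rpow_mul hr]
          norm_cast
    have : 0 ≤ q * L ^ (q - 1) * M * r ^ (q + 1) := by positivity
    linarith
  · have hlarge : |s ^ q - t ^ q| ≤ q * L ^ (q - 1) * M * r ^ (q + 1) :=
      calc |s ^ q - t ^ q| ≤ q * (L * r) ^ (q - 1) * |s - t| :=
            abs_rpow_sub_rpow_le_mul_abs_sub hq₁ hs ht
        _ ≤ q * (L * r) ^ (q - 1) * (M * r ^ 2) := by gcongr
        _ = q * L ^ (q - 1) * M * r ^ (q + 1) := by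
          rw [Real.mul_rpow hL hr, show q + 1 = q - 1 + 2 by ring,
            Real.rpow_add' hr (by linarith)]
          norm_cast
          ring
    have : 0 ≤ M ^ q * r ^ (2 * q) := by positivity
    linarith

theorem abs_rpow_mul_add_rpow_mul_le {q r s t a b L K M₁ M₂ : ℝ} (hq : 0 < q) (hr : 0 ≤ r)
    (hL : 0 ≤ L) (hM₁ : 0 ≤ M₁) (hs : s ∈ Icc 0 (L * r)) (ht : t ∈ Icc 0 (L * r))
    (hst : |s - t| ≤ M₁ * r ^ 2) (hab : |a + b| ≤ M₂ * r ^ 2) (hb : |b| ≤ K * r) :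
    |s ^ q * a + t ^ q * b|
      ≤ (L ^ q * M₂ + q * L ^ (q - 1) * M₁ * K) * r ^ (q + 2) + M₁ ^ q * K * r ^ (2 * q + 1) :=
  calc |s ^ q * a + t ^ q * b| = |s ^ q * (a + b) - (s ^ q - t ^ q) * b| := by ring_nf
    _ ≤ s ^ q * |a + b| + |s ^ q - t ^ q| * |b| := by
        rw [← abs_of_nonneg (Real.rpow_nonneg hs.1 q), ← abs_mul, ← abs_mul,
          abs_of_nonneg (Real.rpow_nonneg hs.1 q)]
        exact abs_sub _ _
    _ ≤ (L * r) ^ q * (M₂ * r ^ 2)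
          + (M₁ ^ q * r ^ (2 * q) + q * L ^ (q - 1) * M₁ * r ^ (q + 1)) * (K * r) := by
        gcongr
        exacts [hs.1, hs.2, abs_rpow_sub_rpow_le_of_abs_sub_le hq hr hL hM₁ hs ht hst]
    _ = _ := by
        rw [Real.mul_rpow hL hr, Real.rpow_add' hr (by linarith), Real.rpow_add' hr (by linarith),
          Real.rpow_add' hr (by linarith)]
        norm_cast
        ring

theorem LipschitzOnWith.dist_le_mul_norm_of_norm_le {E α : Type*} [SeminormedAddCommGroup E]
    [PseudoMetricSpace α] {f : E → α} {x : E} {r : ℝ} {K : ℝ≥0}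
    (hf : LipschitzOnWith K f (closedBall x r)) {y : E} (hy : ‖y‖ ≤ r) :
    dist (f x) (f (x + y)) ≤ K * ‖y‖ := by
  simpa only [dist_self_add_right] using
    hf.dist_le_mul x (mem_closedBall_self ((norm_nonneg y).trans hy)) (x + y)
      (add_mem_closedBall_iff_norm.2 hy)

section SecondDifference

variable {E F : Type*} [NormedAddCommGroup E] [NormedSpace ℝ E] [NormedAddCommGroup F]
  [NormedSpace ℝ F] {f : E → F} {x : E} {r : ℝ}

theorem norm_sub_sub_fderiv_le_of_lipschitzOnWith {K : ℝ≥0}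
    (hf : ∀ z ∈ closedBall x r, DifferentiableAt ℝ f z)
    (hf' : LipschitzOnWith K (fderiv ℝ f) (closedBall x r)) {y : E} (hy : ‖y‖ ≤ r) :
    ‖f (x + y) - f x - fderiv ℝ f x y‖ ≤ K * ‖y‖ ^ 2 := by
  have hball : closedBall x ‖y‖ ⊆ closedBall x r := closedBall_subset_closedBall hy
  have hbound : ∀ z ∈ closedBall x ‖y‖, ‖fderiv ℝ f z - fderiv ℝ f x‖ ≤ K * ‖y‖ := by
    intro z hz
    rw [← dist_eq_norm]
    calc dist (fderiv ℝ f z) (fderiv ℝ f x) ≤ K * dist z x :=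
          hf'.dist_le_mul z (hball hz) x (mem_closedBall_self ((norm_nonneg y).trans hy))
      _ ≤ K * ‖y‖ := by gcongr; exact hz
  have := (convex_closedBall x ‖y‖).norm_image_sub_le_of_norm_fderiv_le'
    (fun z hz => hf z (hball hz)) hbound (mem_closedBall_self (norm_nonneg y))
    (add_mem_closedBall_iff_norm.2 le_rfl)
  rwa [add_sub_cancel_left, mul_assoc, ← sq] at this

theorem norm_add_add_sub_two_smul_le_of_lipschitzOnWith {K : ℝ≥0}
    (hf : ∀ z ∈ closedBall x r, DifferentiableAt ℝ f z)
    (hf' : LipschitzOnWith K (fderiv ℝ f) (closedBall x r)) {y : E} (hy : ‖y‖ ≤ r) :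
    ‖f (x + y) + f (x - y) - 2 • f x‖ ≤ 2 * K * ‖y‖ ^ 2 := by
  have hplus := norm_sub_sub_fderiv_le_of_lipschitzOnWith hf hf' hy
  have hminus := norm_sub_sub_fderiv_le_of_lipschitzOnWith hf hf' (y := -y) (by rwa [norm_neg])
  rw [norm_neg, ← sub_eq_add_neg, map_neg, sub_neg_eq_add] at hminus
  calc ‖f (x + y) + f (x - y) - 2 • f x‖
        = ‖(f (x + y) - f x - fderiv ℝ f x y) + (f (x - y) - f x + fderiv ℝ f x y)‖ := by
          congr 1; rw [two_nsmul]; abel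
    _ ≤ K * ‖y‖ ^ 2 + K * ‖y‖ ^ 2 := norm_add_le_of_le hplus hminus
    _ = 2 * K * ‖y‖ ^ 2 := by ring

theorem ContDiffOn.exists_norm_add_add_sub_two_smul_le [ProperSpace E] {V : Set E} (hV : IsOpen V)
    (hf : ContDiffOn ℝ 2 f V) (hxV : closedBall x r ⊆ V) :
    ∃ M : ℝ≥0, ∀ y : E, ‖y‖ ≤ r → ‖f (x + y) + f (x - y) - 2 • f x‖ ≤ M * ‖y‖ ^ 2 := by
  obtain ⟨K, hK⟩ := ((hf.fderiv_of_isOpen hV le_rfl).mono hxV).exists_lipschitzOnWith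
    one_ne_zero (convex_closedBall x r) (isCompact_closedBall x r)
  have hdiff : ∀ z ∈ closedBall x r, DifferentiableAt ℝ f z := fun z hz =>
    (hf.contDiffAt (hV.mem_nhds (hxV hz))).differentiableAt two_ne_zero
  exact ⟨2 * K, fun y hy => by
    simpa using norm_add_add_sub_two_smul_le_of_lipschitzOnWith hdiff hK hy⟩

end SecondDifference

theorem abs_symmetric_rpow_mul_sub_le_of_lipschitzOnWith {E : Type*} [SeminormedAddCommGroup E]
    {u g : E → ℝ} {x y : E} {q r : ℝ} {L K M₁ M₂ : ℝ≥0} (hq : 0 < q)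
    (hu : LipschitzOnWith L u (closedBall x r)) (hg : LipschitzOnWith K g (closedBall x r))
    (hu₂ : ‖u (x + y) + u (x - y) - 2 • u x‖ ≤ M₁ * ‖y‖ ^ 2)
    (hg₂ : ‖g (x + y) + g (x - y) - 2 • g x‖ ≤ M₂ * ‖y‖ ^ 2) (hy : ‖y‖ ≤ r) :
    |(|u x - u (x + y)|) ^ q * (g x - g (x + y)) + |u x - u (x - y)| ^ q * (g x - g (x - y))|
      ≤ (L ^ q * M₂ + q * L ^ (q - 1) * M₁ * K) * ‖y‖ ^ (q + 2)
        + M₁ ^ q * K * ‖y‖ ^ (2 * q + 1) := by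
  have hy' : ‖-y‖ ≤ r := by rwa [norm_neg]
  have hs : |u x - u (x + y)| ∈ Icc 0 (L * ‖y‖) :=
    ⟨abs_nonneg _, hu.dist_le_mul_norm_of_norm_le hy⟩
  have ht : |u x - u (x - y)| ∈ Icc 0 (L * ‖y‖) := ⟨abs_nonneg _, by
    simpa only [Real.dist_eq, norm_neg, ← sub_eq_add_neg] using
      hu.dist_le_mul_norm_of_norm_le hy'⟩
  have hst : abs (|u x - u (x + y)| - |u x - u (x - y)|) ≤ M₁ * ‖y‖ ^ 2 := by
    have h := abs_abs_sub_abs_le_abs_sub (u x - u (x + y)) (-(u x - u (x - y)))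
    rw [abs_neg] at h
    refine h.trans (le_of_eq_of_le ?_ hu₂)
    rw [Real.norm_eq_abs, ← abs_neg, two_nsmul]
    ring_nf
  have hab : |(g x - g (x + y)) + (g x - g (x - y))| ≤ M₂ * ‖y‖ ^ 2 := by
    refine le_of_eq_of_le ?_ hg₂
    rw [Real.norm_eq_abs, ← abs_neg, two_nsmul]
    ring_nf
  have hb : |g x - g (x - y)| ≤ K * ‖y‖ := by
    simpa only [Real.dist_eq, norm_neg, ← sub_eq_add_neg] using
      hg.dist_le_mul_norm_of_norm_le hy'
  exact abs_rpow_mul_add_rpow_mul_le hq (norm_nonneg y) L.2 M₁.2 hs ht hst hab hb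

theorem stmt10_general (n : ℕ) (p : ℝ) (hp : 2 < p)
    (x : EuclideanSpace ℝ (Fin n)) (u : EuclideanSpace ℝ (Fin n) → ℝ)
    (V : Set (EuclideanSpace ℝ (Fin n))) (hV : IsOpen V) (hxV : Metric.closedBall x 1 ⊆ V)
    (hu : ContDiffOn ℝ 3 u V) (i : Fin n) :
    ∃ C : ℝ, 0 < C ∧ ∀ y : EuclideanSpace ℝ (Fin n), 0 < ‖y‖ → ‖y‖ ≤ 1 →
      abs ( |u x - u (x + y)| ^ (p-2) *
          (fderiv ℝ u x (EuclideanSpace.single i 1) - fderiv ℝ u (x + y) (EuclideanSpace.single i 1))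
      + |u x - u (x - y)| ^ (p-2) *
          (fderiv ℝ u x (EuclideanSpace.single i 1) - fderiv ℝ u (x - y) (EuclideanSpace.single i 1)) )
      ≤ C * (‖y‖ ^ (2*p - 3) + ‖y‖ ^ p) := by
  set g : EuclideanSpace ℝ (Fin n) → ℝ := fun z => fderiv ℝ u z (EuclideanSpace.single i 1)
  have hg : ContDiffOn ℝ 2 g V :=
    (hu.fderiv_of_isOpen hV (by norm_num)).clm_apply contDiffOn_const
  obtain ⟨L, hL⟩ := (hu.mono hxV).exists_lipschitzOnWith (by norm_num) (convex_closedBall x 1)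
    (isCompact_closedBall x 1)
  obtain ⟨K, hK⟩ := (hg.mono hxV).exists_lipschitzOnWith (by norm_num) (convex_closedBall x 1)
    (isCompact_closedBall x 1)
  obtain ⟨M₁, hM₁⟩ := (hu.of_le (by norm_num)).exists_norm_add_add_sub_two_smul_le hV hxV
  obtain ⟨M₂, hM₂⟩ := hg.exists_norm_add_add_sub_two_smul_le hV hxV
  set q := p - 2
  set A : ℝ := L ^ q * M₂ + q * L ^ (q - 1) * M₁ * K
  set B : ℝ := M₁ ^ q * K
  have hA : 0 ≤ A := by positivity
  have hB : 0 ≤ B := by positivity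
  refine ⟨A + B + 1, by positivity, fun y _ hy => ?_⟩
  have key := abs_symmetric_rpow_mul_sub_le_of_lipschitzOnWith (sub_pos.2 hp) hL hK
    (hM₁ y hy) (hM₂ y hy) hy
  rw [show q + 2 = p by ring, show 2 * q + 1 = 2 * p - 3 by ring] at key
  have hX : 0 ≤ ‖y‖ ^ p := by positivity
  have hY : 0 ≤ ‖y‖ ^ (2 * p - 3) := by positivity
  calc _ ≤ A * ‖y‖ ^ p + B * ‖y‖ ^ (2 * p - 3) := key
    _ ≤ (A + B + 1) * (‖y‖ ^ (2 * p - 3) + ‖y‖ ^ p) := by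
      nlinarith [mul_nonneg hA hY, mul_nonneg hB hX]

/-- let `n ≥ 1`, `p > 2`, `x ∈ ℝⁿ` and let `u` be `C³` on a neighborhood of
`closedBall x 1`. Then for every index `i` there is `C > 0` such that for all `0 < |y| ≤ 1`:
`| |u(x)−u(x+y)|^{p−2}(∂ᵢu(x)−∂ᵢu(x+y)) + |u(x)−u(x−y)|^{p−2}(∂ᵢu(x)−∂ᵢu(x−y)) |
  ≤ C (|y|^{2p−3} + |y|^p)`. -/
theorem stmt10 (n : ℕ) (hn : 1 ≤ n) (p : ℝ) (hp : 2 < p)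
    (x : EuclideanSpace ℝ (Fin n)) (u : EuclideanSpace ℝ (Fin n) → ℝ)
    (V : Set (EuclideanSpace ℝ (Fin n))) (hV : IsOpen V) (hxV : Metric.closedBall x 1 ⊆ V)
    (hu : ContDiffOn ℝ 3 u V) (i : Fin n) :
    ∃ C : ℝ, 0 < C ∧ ∀ y : EuclideanSpace ℝ (Fin n), 0 < ‖y‖ → ‖y‖ ≤ 1 →
      abs ( |u x - u (x + y)| ^ (p-2) *
          (fderiv ℝ u x (EuclideanSpace.single i 1) - fderiv ℝ u (x + y) (EuclideanSpace.single i 1))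
      + |u x - u (x - y)| ^ (p-2) *
          (fderiv ℝ u x (EuclideanSpace.single i 1) - fderiv ℝ u (x - y) (EuclideanSpace.single i 1)) )
      ≤ C * (‖y‖ ^ (2*p - 3) + ‖y‖ ^ p) :=
  stmt10_general n p hp x u V hV hxV hu i
end

section
/- Let s ∈ (0,1) and 2 < p < 3/(2−s). Then there exists a constant C > 0 such that for all x ∈ (0, 1/8): ∫₀^{1/2} (|y−2x|^{p−2} − (y+2x)^{p−2}) / y^{2+sp−p} dy ≤ −C x^{2p−sp−3}. In particular, since 2p − sp − 3 < 0, this integral tends to −∞ as x → 0⁺. -/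
/-!
With `q = p - 2` and `a = 2 + s p - p`, the integrand is nonpositive for `y > 0` because
`|y - 2x| ≤ y + 2x`, so the integral is at most its part over `(x, 2x]`. There
`|y - 2x| ^ q ≤ x ^ q`, `(y + 2x) ^ q ≥ (3x) ^ q` and `y ^ a ≤ (2x) ^ a`, which gives the bound
`-(3 ^ q - 1) / 2 ^ a * x ^ (q + 1 - a)`. The integral exists because near `y = 0` concavity of
`t ↦ t ^ q` makes the numerator `O(y)`, and `y ^ (1 - a)` is integrable at `0` as `a < 2`.
-/

open MeasureTheory Set Filter Topology

noncomputable def powDiffKernel (q a x y : ℝ) : ℝ := (|y - 2 * x| ^ q - (y + 2 * x) ^ q) / y ^ a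

theorem rpow_le_tangent_of_le_one {q A B : ℝ} (hq0 : 0 ≤ q) (hq1 : q ≤ 1) (hB : 0 < B)
    (hA : 0 ≤ A) : A ^ q ≤ B ^ q + q * B ^ (q - 1) * (A - B) := by
  have ht : -1 ≤ (A - B) / B := by
    rw [le_div_iff₀ hB]; linarith
  calc A ^ q = B ^ q * (1 + (A - B) / B) ^ q := by
        rw [← Real.mul_rpow hB.le (by linarith)]; congr 1; field_simp; ring
    _ ≤ B ^ q * (1 + q * ((A - B) / B)) := by
        gcongr; exact rpow_one_add_le_one_add_mul_self ht hq0 hq1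
    _ = B ^ q + q * B ^ (q - 1) * (A - B) := by
        rw [Real.rpow_sub_one hB.ne']; field_simp

section
variable {q a x : ℝ}

theorem powDiffKernel_nonpos {y : ℝ} (hq : 0 ≤ q) (hx : 0 ≤ x) (hy : 0 ≤ y) :
    powDiffKernel q a x y ≤ 0 := by
  have hle : |y - 2 * x| ^ q ≤ (y + 2 * x) ^ q :=
    Real.rpow_le_rpow (abs_nonneg _) (abs_le.mpr ⟨by linarith, by linarith⟩) hq
  exact div_nonpos_of_nonpos_of_nonneg (by linarith) (Real.rpow_nonneg hy _)

theorem continuousOn_powDiffKernel (hq : 0 ≤ q) : ContinuousOn (powDiffKernel q a x) (Ioi 0) := by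
  refine ContinuousOn.div (Continuous.continuousOn ?_) ?_
    fun y hy => (Real.rpow_pos_of_pos hy a).ne'
  · exact (by fun_prop : Continuous fun y : ℝ => |y - 2 * x|).rpow_const (fun _ => Or.inr hq) |>.sub
      ((by fun_prop : Continuous fun y : ℝ => y + 2 * x).rpow_const fun _ => Or.inr hq)
  · exact fun y hy => (Real.continuousAt_rpow_const y a (Or.inl (ne_of_gt hy))).continuousWithinAt

theorem norm_powDiffKernel_le {y : ℝ} (hq0 : 0 ≤ q) (hq1 : q ≤ 1) (hy : 0 < y) (hyx : y ≤ x) :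
    ‖powDiffKernel q a x y‖ ≤ 2 * q * x ^ (q - 1) * y ^ (1 - a) := by
  have hx : 0 < x := hy.trans_le hyx
  have hya : 0 < y ^ a := Real.rpow_pos_of_pos hy a
  have habs : |y - 2 * x| = 2 * x - y := by rw [abs_of_neg (by linarith)]; ring
  have hnum : (y + 2 * x) ^ q - (2 * x - y) ^ q ≤ 2 * q * x ^ (q - 1) * y := by
    have htan := rpow_le_tangent_of_le_one hq0 hq1 (by linarith : 0 < 2 * x - y)
      (by linarith : 0 ≤ y + 2 * x)
    have hmono : (2 * x - y) ^ (q - 1) ≤ x ^ (q - 1) :=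
      Real.rpow_le_rpow_of_nonpos hx (by linarith) (by linarith)
    nlinarith [mul_le_mul_of_nonneg_left hmono (by positivity : 0 ≤ 2 * q * y)]
  rw [Real.norm_eq_abs, abs_of_nonpos (powDiffKernel_nonpos hq0 hx.le hy.le), powDiffKernel,
    habs, ← neg_div, neg_sub, Real.rpow_sub hy, Real.rpow_one, ← mul_div_assoc]
  gcongr

theorem integrableOn_powDiffKernel (hq0 : 0 ≤ q) (hq1 : q ≤ 1) (ha : a < 2) (hx : 0 < x) (b : ℝ) :
    IntegrableOn (powDiffKernel q a x) (Ioc 0 b) := by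
  have hnear : IntegrableOn (powDiffKernel q a x) (Ioc 0 x) := by
    have hdom : IntegrableOn (fun y => 2 * q * x ^ (q - 1) * y ^ (1 - a)) (Ioc 0 x) :=
      ((intervalIntegrable_iff_integrableOn_Ioc_of_le hx.le).mp
        (intervalIntegral.intervalIntegrable_rpow' (by linarith))).const_mul _
    refine hdom.mono' (((continuousOn_powDiffKernel hq0).mono fun y hy => hy.1).aestronglyMeasurable
      measurableSet_Ioc) ?_
    filter_upwards [ae_restrict_mem measurableSet_Ioc] with y hy
    exact norm_powDiffKernel_le hq0 hq1 hy.1 hy.2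
  have haway : IntegrableOn (powDiffKernel q a x) (Ioc x b) :=
    (((continuousOn_powDiffKernel hq0).mono fun y hy => hx.trans_le hy.1).integrableOn_compact
      isCompact_Icc).mono_set Ioc_subset_Icc_self
  exact (hnear.union haway).mono_set Ioc_subset_Ioc_union_Ioc

theorem powDiffKernel_le_of_mem_Ioc {y : ℝ} (hq : 0 ≤ q) (ha : 0 ≤ a) (hx : 0 < x)
    (hy : y ∈ Ioc x (2 * x)) : powDiffKernel q a x y ≤ -((3 ^ q - 1) / 2 ^ a) * x ^ (q - a) := by
  obtain ⟨hxy, hy2x⟩ := hy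
  have hy0 : 0 < y := hx.trans hxy
  have habs : |y - 2 * x| = 2 * x - y := by rw [abs_of_nonpos (by linarith)]; ring
  have hnum : (2 * x - y) ^ q - (y + 2 * x) ^ q ≤ -((3 ^ q - 1) * x ^ q) := by
    have h1 : (2 * x - y) ^ q ≤ x ^ q := Real.rpow_le_rpow (by linarith) (by linarith) hq
    have h2 : (3 * x) ^ q ≤ (y + 2 * x) ^ q := Real.rpow_le_rpow (by linarith) (by linarith) hq
    rw [Real.mul_rpow (by norm_num) hx.le] at h2
    linarith
  have hden : y ^ a ≤ 2 ^ a * x ^ a := by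
    rw [← Real.mul_rpow (by norm_num) hx.le]
    exact Real.rpow_le_rpow hy0.le hy2x ha
  have hC : 0 ≤ (3 ^ q - 1) * x ^ q := by
    have : (1 : ℝ) ≤ 3 ^ q := Real.one_le_rpow (by norm_num) hq
    have := Real.rpow_nonneg hx.le q
    nlinarith
  calc powDiffKernel q a x y ≤ -((3 ^ q - 1) * x ^ q) / y ^ a := by
        rw [powDiffKernel, habs]
        gcongr
    _ ≤ -((3 ^ q - 1) * x ^ q) / (2 ^ a * x ^ a) := by
        rw [neg_div, neg_div, neg_le_neg_iff]
        exact div_le_div_of_nonneg_left hC (Real.rpow_pos_of_pos hy0 a) hden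
    _ = -((3 ^ q - 1) / 2 ^ a) * x ^ (q - a) := by
        rw [Real.rpow_sub hx]; field_simp

theorem setIntegral_powDiffKernel_le {b : ℝ} (hq0 : 0 ≤ q) (hq1 : q ≤ 1) (ha0 : 0 ≤ a) (ha2 : a < 2)
    (hx : 0 < x) (hb : 2 * x ≤ b) :
    ∫ y in Ioc 0 b, powDiffKernel q a x y ≤ -((3 ^ q - 1) / 2 ^ a) * x ^ (q + 1 - a) := by
  have hsub : Ioc x (2 * x) ⊆ Ioc 0 b := Ioc_subset_Ioc hx.le hb
  have hint := integrableOn_powDiffKernel hq0 hq1 ha2 hx b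
  have hdrop : ∫ y in Ioc 0 b, powDiffKernel q a x y ≤
      ∫ y in Ioc x (2 * x), powDiffKernel q a x y := by
    have := setIntegral_mono_set hint.neg
      (ae_restrict_of_forall_mem measurableSet_Ioc fun y hy =>
        neg_nonneg.mpr (powDiffKernel_nonpos hq0 hx.le hy.1.le)) hsub.eventuallyLE
    simpa only [Pi.neg_apply, integral_neg, neg_le_neg_iff] using this
  calc ∫ y in Ioc 0 b, powDiffKernel q a x y
      ≤ ∫ y in Ioc x (2 * x), powDiffKernel q a x y := hdrop
    _ ≤ ∫ _ in Ioc x (2 * x), -((3 ^ q - 1) / 2 ^ a) * x ^ (q - a) :=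
        setIntegral_mono_on (hint.mono_set hsub) (integrableOn_const measure_Ioc_lt_top.ne)
          measurableSet_Ioc fun y hy => powDiffKernel_le_of_mem_Ioc hq0 ha0 hx hy
    _ = -((3 ^ q - 1) / 2 ^ a) * x ^ (q + 1 - a) := by
        rw [setIntegral_const, measureReal_def, Real.volume_Ioc, smul_eq_mul,
          ENNReal.toReal_ofReal (by linarith), show 2 * x - x = x by ring,
          show q + 1 - a = q - a + 1 by ring, Real.rpow_add_one hx.ne']
        ring

end

theorem tendsto_atBot_of_le_neg_mul_rpow {f : ℝ → ℝ} {C e : ℝ} (hC : 0 < C) (he : e < 0)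
    (hf : ∀ᶠ x in 𝓝[>] 0, f x ≤ -C * x ^ e) : Tendsto f (𝓝[>] 0) atBot := by
  refine tendsto_atBot_mono' _ hf ?_
  simpa only [neg_mul] using
    tendsto_neg_atBot_iff.mpr ((tendsto_rpow_neg_nhdsGT_zero he).const_mul_atTop hC)

/-- For `s ∈ (0,1)` and `2 < p < 3/(2−s)`, there is `C > 0` with
`∫₀^{1/2} (|y−2x|^{p−2} − (y+2x)^{p−2}) / y^{2+sp−p} dy ≤ −C x^{2p−sp−3}` for all
`x ∈ (0,1/8)`; since `2p − sp − 3 < 0`, the integral tends to `−∞` as `x → 0⁺`. -/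
theorem stmt14 (p s : ℝ) (hs : s ∈ Set.Ioo (0:ℝ) 1) (hp : 2 < p) (hp' : p < 3/(2-s)) :
    (∃ C : ℝ, 0 < C ∧ ∀ x ∈ Set.Ioo (0:ℝ) (1/8),
      (∫ y in Set.Ioc (0:ℝ) (1/2),
          (|y - 2*x| ^ (p-2) - (y + 2*x) ^ (p-2)) / y ^ (2 + s*p - p))
        ≤ -C * x ^ (2*p - s*p - 3)) ∧
    2*p - s*p - 3 < 0 ∧
    Filter.Tendsto (fun x : ℝ =>
        ∫ y in Set.Ioc (0:ℝ) (1/2),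
          (|y - 2*x| ^ (p-2) - (y + 2*x) ^ (p-2)) / y ^ (2 + s*p - p))
      (nhdsWithin 0 (Set.Ioi 0)) Filter.atBot := by
  obtain ⟨-, hs1⟩ := hs
  have hkey : p * (2 - s) < 3 := (lt_div_iff₀ (by linarith)).mp hp'
  have hq0 : 0 < p - 2 := by linarith
  have hq1 : p - 2 ≤ 1 := by nlinarith
  have ha0 : 0 ≤ 2 + s*p - p := by nlinarith
  have ha2 : 2 + s*p - p < 2 := by nlinarith
  have he : 2*p - s*p - 3 < 0 := by linarith
  have hexp : p - 2 + 1 - (2 + s*p - p) = 2*p - s*p - 3 := by ring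
  have hC : 0 < ((3 : ℝ) ^ (p-2) - 1) / 2 ^ (2 + s*p - p) :=
    div_pos (by linarith [Real.one_lt_rpow (by norm_num : (1 : ℝ) < 3) hq0]) (by positivity)
  have hbound : ∀ x ∈ Ioo (0 : ℝ) (1/8), ∫ y in Ioc 0 (1/2), powDiffKernel (p-2) (2 + s*p - p) x y
      ≤ -(((3 : ℝ) ^ (p-2) - 1) / 2 ^ (2 + s*p - p)) * x ^ (2*p - s*p - 3) := fun x hx =>
    hexp ▸ setIntegral_powDiffKernel_le hq0.le hq1 ha0 ha2 hx.1 (by linarith [hx.2])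
  exact ⟨⟨_, hC, hbound⟩, he, tendsto_atBot_of_le_neg_mul_rpow hC he
    (mem_of_superset (Ioo_mem_nhdsGT (by norm_num)) hbound)⟩
end
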